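/- On the 3-torus 𝕋³ with pseudo-coordinates (θ₁, θ₂, θ₃), the forms ω₁ = cosθ₁ dθ₂ + sinθ₁ dθ₃ and ω₂ = −sinθ₁ dθ₂ + cosθ₁ dθ₃ generate a round contact circle: their Reeb vector fields are R₁ = cosθ₁ ∂θ₂ + sinθ₁ ∂θ₃ and R₂ = −sinθ₁ ∂θ₂ + cosθ₁ ∂θ₃, and these satisfy ωᵢ(Rⱼ) = δᵢⱼ and R₁ ⨼ dω₂ + R₂ ⨼ dω₁ = 0. -/

import Mathlib

/-!
Both forms are `f(θ₁) dθ₂ + g(θ₁) dθ₃`, so their differentials are `dθ₁ ∧ (f' dθ₂ + g' dθ₃)`;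
since `(cos, sin)' = (-sin, cos)`, this gives `dω₁ = dθ₁ ∧ ω₂` and `dω₂ = -dθ₁ ∧ ω₁`.
The fields `Rᵢ` have no `∂θ₁` component, so `Rᵢ ⨼ dωⱼ` is `dθ₁` times a pairing `ωₖ(Rᵢ)`:
`R₁ ⨼ dω₁ = -ω₂(R₁) dθ₁ = 0`, `R₂ ⨼ dω₂ = ω₁(R₂) dθ₁ = 0` and
`R₁ ⨼ dω₂ + R₂ ⨼ dω₁ = (ω₁(R₁) - ω₂(R₂)) dθ₁ = 0`.
-/

open scoped BigOperators

noncomputable section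

abbrev E3 : Type := Fin 3 → ℝ

/-- `ω₁ = cosθ₁ dθ₂ + sinθ₁ dθ₃` on the 3-torus (angular coordinates). -/
def w1 (θ v : E3) : ℝ := Real.cos (θ 0) * v 1 + Real.sin (θ 0) * v 2

/-- `ω₂ = −sinθ₁ dθ₂ + cosθ₁ dθ₃` on the 3-torus (angular coordinates). -/
def w2 (θ v : E3) : ℝ := -Real.sin (θ 0) * v 1 + Real.cos (θ 0) * v 2

/-- `R₁ = cosθ₁ ∂θ₂ + sinθ₁ ∂θ₃`. -/
def r1 (θ : E3) : E3 := ![0, Real.cos (θ 0), Real.sin (θ 0)]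

/-- `R₂ = −sinθ₁ ∂θ₂ + cosθ₁ ∂θ₃`. -/
def r2 (θ : E3) : E3 := ![0, -Real.sin (θ 0), Real.cos (θ 0)]

/-- Exterior derivative of a 1-form, evaluated at `x` on `u, v`. -/
def extd (ω : E3 → E3 → ℝ) (x u v : E3) : ℝ :=
  fderiv ℝ (fun y => ω y v) x u - fderiv ℝ (fun y => ω y u) x v

theorem fderiv_apply_mul_add_apply_mul {f g : ℝ → ℝ} {f' g' : ℝ} {x : E3} {i : Fin 3}
    (hf : HasDerivAt f f' (x i)) (hg : HasDerivAt g g' (x i)) (a b : ℝ) (u : E3) :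
    fderiv ℝ (fun y : E3 => f (y i) * a + g (y i) * b) x u = u i * (f' * a + g' * b) := by
  have hproj := hasFDerivAt_apply (𝕜 := ℝ) i x
  have h : HasFDerivAt (fun y : E3 => f (y i) * a + g (y i) * b) _ x :=
    ((hf.comp_hasFDerivAt x hproj).mul_const a).add ((hg.comp_hasFDerivAt x hproj).mul_const b)
  rw [h.fderiv]
  simp only [add_apply, smul_apply, ContinuousLinearMap.proj_apply, smul_eq_mul]
  ring

theorem extd_apply_mul_add_apply_mul {f g : ℝ → ℝ} {f' g' : ℝ} {x : E3} {i : Fin 3}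
    (hf : HasDerivAt f f' (x i)) (hg : HasDerivAt g g' (x i)) (j k : Fin 3) (u v : E3) :
    extd (fun θ w => f (θ i) * w j + g (θ i) * w k) x u v =
      u i * (f' * v j + g' * v k) - v i * (f' * u j + g' * u k) := by
  simp only [extd, fderiv_apply_mul_add_apply_mul hf hg]

theorem extd_w1 (x u v : E3) : extd w1 x u v = u 0 * w2 x v - v 0 * w2 x u := by
  rw [show w1 = fun θ w => Real.cos (θ 0) * w 1 + Real.sin (θ 0) * w 2 from rfl,
    extd_apply_mul_add_apply_mul (Real.hasDerivAt_cos _) (Real.hasDerivAt_sin _)]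
  unfold w2
  ring

theorem extd_w2 (x u v : E3) : extd w2 x u v = v 0 * w1 x u - u 0 * w1 x v := by
  rw [show w2 = fun θ w => (fun t => -Real.sin t) (θ 0) * w 1 + Real.cos (θ 0) * w 2 from rfl,
    extd_apply_mul_add_apply_mul (f := fun t => -Real.sin t) (Real.hasDerivAt_sin _).neg
      (Real.hasDerivAt_cos _)]
  unfold w1
  ring

@[simp] theorem r1_zero (θ : E3) : r1 θ 0 = 0 := rfl

@[simp] theorem r2_zero (θ : E3) : r2 θ 0 = 0 := rfl

@[simp] theorem w1_r1 (θ : E3) : w1 θ (r1 θ) = 1 := by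
  simp [w1, r1, ← sq, Real.cos_sq_add_sin_sq]

@[simp] theorem w2_r2 (θ : E3) : w2 θ (r2 θ) = 1 := by
  simp [w2, r2, ← sq, Real.sin_sq_add_cos_sq]

@[simp] theorem w1_r2 (θ : E3) : w1 θ (r2 θ) = 0 := by
  simp [w1, r2]
  ring

@[simp] theorem w2_r1 (θ : E3) : w2 θ (r1 θ) = 0 := by
  simp [w2, r1]
  ring

/-- On 𝕋³, the forms `ω₁ = cosθ₁ dθ₂ + sinθ₁ dθ₃` and
`ω₂ = −sinθ₁ dθ₂ + cosθ₁ dθ₃` generate a round contact circle: their Reeb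
vector fields are `R₁ = cosθ₁ ∂θ₂ + sinθ₁ ∂θ₃` and
`R₂ = −sinθ₁ ∂θ₂ + cosθ₁ ∂θ₃` (so `ωᵢ(Rᵢ) = 1`, `Rᵢ ⨼ dωᵢ = 0`), and they
satisfy `ωᵢ(Rⱼ) = δᵢⱼ` and `R₁ ⨼ dω₂ + R₂ ⨼ dω₁ = 0`. -/
theorem stmt16 :
    (∀ θ : E3, w1 θ (r1 θ) = 1 ∧ w2 θ (r2 θ) = 1 ∧
      w1 θ (r2 θ) = 0 ∧ w2 θ (r1 θ) = 0) ∧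
    (∀ θ u, extd w1 θ (r1 θ) u = 0) ∧
    (∀ θ u, extd w2 θ (r2 θ) u = 0) ∧
    (∀ θ u, extd w2 θ (r1 θ) u + extd w1 θ (r2 θ) u = 0) := by
  refine ⟨fun θ => ⟨w1_r1 θ, w2_r2 θ, w1_r2 θ, w2_r1 θ⟩, fun θ u => ?_, fun θ u => ?_,
    fun θ u => ?_⟩ <;>
  simp [extd_w1, extd_w2]

end
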